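/- arXiv:1807.08610 — 6 statements merged into one kernel-verified Lean document; each statement's English description precedes it below -/
import Mathlib

section
/- Let S be a step set satisfying Hypothesis (H), let i₀ ≥ 0, and let c_{i,j}(n) count n-step S-walks in the three-quadrant cone C starting at (i₀,i₀) and ending at (i,j). Then the following identity of formal power series in t, with coefficients in ℚ[x, x^{−1}, y, y^{−1}], holds: L̂(x,y) = t·(Σ_{(i,j)∈S} x^i y^j)·L̂(x,y) + t(δ_{1,0}x + δ_{0,−1}y^{−1})·D̂(x,y) − t(δ_{−1,0}x^{−1} + δ_{0,1}y)·D̂^ℓ(x,y) − t(δ_{−1,0}x^{−1} + δ_{−1,−1}x^{−1}y^{−1})·L̂_{0−}(y^{−1}) + t·δ_{−1,0}·x^{−1}y^{−1}·Σ_{n≥0} c_{0,−1}(n) t^n. -/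
open scoped BigOperators

/-- The three-quadrant cone `𝒞 = {(i,j) ∈ ℤ² : i ≥ 0 or j ≥ 0}`. -/
def cone : Set (ℤ × ℤ) := {p | 0 ≤ p.1 ∨ 0 ≤ p.2}

/-- `walkCount S R p₀ n q`: the number of `n`-step walks with steps in `S`, all of whose
points lie in the region `R`, starting at `p₀` and ending at `q`. -/
noncomputable def walkCount (S : Finset (ℤ × ℤ)) (R : Set (ℤ × ℤ)) (p₀ : ℤ × ℤ)
    (n : ℕ) (q : ℤ × ℤ) : ℕ :=
  Nat.card {w : Fin (n + 1) → ℤ × ℤ //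
    w 0 = p₀ ∧ w (Fin.last n) = q ∧ (∀ k, w k ∈ R) ∧
    ∀ k : Fin n, w k.succ - w k.castSucc ∈ S}

/-- Laurent polynomials in the two variables `x, y`, with rational coefficients. -/
abbrev LP : Type := AddMonoidAlgebra ℚ (ℤ × ℤ)

/-- The Laurent monomial `x^i y^j`. -/
noncomputable def mono (v : ℤ × ℤ) : LP := AddMonoidAlgebra.single v 1

/-- Formal power series in `t` with Laurent-polynomial coefficients. -/
abbrev PS : Type := PowerSeries LP

noncomputable def CL : LP →+* PS := PowerSeries.C

/-- The series variable `t`. -/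
noncomputable def T : PS := PowerSeries.X

/-- The rational constant `1/2`. -/
noncomputable def half : PS := PowerSeries.C (algebraMap ℚ LP (1/2))

/-- The points reachable from `p₀` in at most `n` small steps. -/
noncomputable def box (p₀ : ℤ × ℤ) (n : ℕ) : Finset (ℤ × ℤ) :=
  Finset.Icc (p₀.1 - n, p₀.2 - n) (p₀.1 + n, p₀.2 + n)

/-- The diagonal starting point `(i₀, i₀)`. -/
def start (i₀ : ℕ) : ℤ × ℤ := ((i₀ : ℤ), (i₀ : ℤ))

/-- The kernel `K(x,y) = xy (t ∑_{(i,j) ∈ S} x^i y^j - 1)`. -/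
noncomputable def kerK (S : Finset (ℤ × ℤ)) : PS :=
  CL (mono (1, 1)) * (T * CL (∑ s ∈ S, mono s) - 1)

/-- `δ_v`: the indicator that the step `v` belongs to `S`. -/
noncomputable def dl (S : Finset (ℤ × ℤ)) (v : ℤ × ℤ) : PS := if v ∈ S then 1 else 0

/-- `L̂(x,y) = ∑_{n ≥ 0} ∑_{i ≥ 0, j ≤ i-1} c_{i,j}(n) x^i y^j t^n`:
walks ending strictly below the diagonal (in the lower part). -/
noncomputable def Lhat (S : Finset (ℤ × ℤ)) (i₀ : ℕ) : PS :=
  PowerSeries.mk fun n =>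
    ∑ p ∈ (box (start i₀) n).filter (fun p => 0 ≤ p.1 ∧ p.2 ≤ p.1 - 1),
      (walkCount S cone (start i₀) n p : LP) * mono p

/-- `Û(x,y) = ∑_{n ≥ 0} ∑_{j ≥ 0, i ≤ j-1} c_{i,j}(n) x^i y^j t^n`:
walks ending strictly above the diagonal (in the upper part). -/
noncomputable def Uhat (S : Finset (ℤ × ℤ)) (i₀ : ℕ) : PS :=
  PowerSeries.mk fun n =>
    ∑ p ∈ (box (start i₀) n).filter (fun p => 0 ≤ p.2 ∧ p.1 ≤ p.2 - 1),
      (walkCount S cone (start i₀) n p : LP) * mono p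

/-- `D̂(x,y) = ∑_{n ≥ 0} ∑_{i ≥ 0} c_{i,i}(n) x^i y^i t^n`: walks ending on the diagonal. -/
noncomputable def Dhat (S : Finset (ℤ × ℤ)) (i₀ : ℕ) : PS :=
  PowerSeries.mk fun n =>
    ∑ i ∈ Finset.Icc (0 : ℤ) ((i₀ : ℤ) + n),
      (walkCount S cone (start i₀) n (i, i) : LP) * mono (i, i)

/-- `D̂^ℓ(x,y) = ∑_{n ≥ 0} ∑_{i ≥ 0} c_{i,i-1}(n) x^i y^{i-1} t^n`:
walks ending on the lower diagonal. -/
noncomputable def Dlow (S : Finset (ℤ × ℤ)) (i₀ : ℕ) : PS :=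
  PowerSeries.mk fun n =>
    ∑ i ∈ Finset.Icc (0 : ℤ) ((i₀ : ℤ) + n),
      (walkCount S cone (start i₀) n (i, i - 1) : LP) * mono (i, i - 1)

/-- `L̂_{0-}(y⁻¹) = ∑_{n ≥ 0} ∑_{j < 0} c_{0,j}(n) y^j t^n`:
walks ending on the negative `y`-axis. -/
noncomputable def L0minus (S : Finset (ℤ × ℤ)) (i₀ : ℕ) : PS :=
  PowerSeries.mk fun n =>
    ∑ j ∈ Finset.Icc ((i₀ : ℤ) - n) (-1),
      (walkCount S cone (start i₀) n (0, j) : LP) * mono (0, j)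

/-- `D̂(0,0) = ∑_{n ≥ 0} c_{0,0}(n) t^n`: walks ending at the origin. -/
noncomputable def D00 (S : Finset (ℤ × ℤ)) (i₀ : ℕ) : PS :=
  PowerSeries.mk fun n => (walkCount S cone (start i₀) n (0, 0) : LP)

/-- `∑_{n ≥ 0} c_{0,-1}(n) t^n`: walks ending at `(0,-1)`. -/
noncomputable def C0m1 (S : Finset (ℤ × ℤ)) (i₀ : ℕ) : PS :=
  PowerSeries.mk fun n => (walkCount S cone (start i₀) n (0, -1) : LP)


/-!
A walk of length `n + 1` ending at a point `q` of the cone is a walk of length `n` ending at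
`q - s` followed by a step `s ∈ S`, so `c_q(n+1) = ∑_{s ∈ S} c_{q-s}(n)`. Summed over the lower
part, the contribution of the step `s` counts the walks of length `n` ending at a point `p` with
`p + s` in the lower part, and this differs from `L̂` only along the boundary of the lower part:
`(1,0)` and `(0,-1)` enter it from the diagonal, `(-1,0)` and `(0,1)` leave it across the lower
diagonal, `(-1,0)` and `(-1,-1)` leave it (and the cone) from the negative `y`-axis, and the
point `(0,-1)`, lying on both of the last two lines, is removed twice by the step `(-1,0)`.
Without the steps `(-1,1)` and `(1,-1)` no other point crosses the boundary.
-/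

section Walks

variable {S : Finset (ℤ × ℤ)} {R : Set (ℤ × ℤ)} {p₀ q : ℤ × ℤ} {n : ℕ}

abbrev ConfinedWalk (S : Finset (ℤ × ℤ)) (R : Set (ℤ × ℤ)) (p₀ : ℤ × ℤ) (n : ℕ) (q : ℤ × ℤ) :
    Type :=
  {w : Fin (n + 1) → ℤ × ℤ //
    w 0 = p₀ ∧ w (Fin.last n) = q ∧ (∀ k, w k ∈ R) ∧
    ∀ k : Fin n, w k.succ - w k.castSucc ∈ S}

theorem walkCount_eq_card : walkCount S R p₀ n q = Nat.card (ConfinedWalk S R p₀ n q) := rfl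

namespace ConfinedWalk

def snocEquiv (hq : q ∈ R) :
    ConfinedWalk S R p₀ (n + 1) q ≃ Σ s : S, ConfinedWalk S R p₀ n (q - s) where
  toFun := fun ⟨w, h0, hl, hR, hstep⟩ =>
    ⟨⟨q - w (Fin.last n).castSucc, by rw [← hl, ← Fin.succ_last]; exact hstep (Fin.last n)⟩,
      ⟨w ∘ Fin.castSucc, h0, (sub_sub_cancel _ _).symm, fun _ => hR _,
        fun k => by simpa only [Function.comp, Fin.succ_castSucc] using hstep k.castSucc⟩⟩
  invFun := fun ⟨⟨s, hs⟩, v, h0, hl, hR, hstep⟩ =>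
    ⟨Fin.snoc v q, by rw [← Fin.castSucc_zero, Fin.snoc_castSucc]; exact h0,
      Fin.snoc_last _ _,
      Fin.lastCases (by rw [Fin.snoc_last]; exact hq)
        (fun k => by rw [Fin.snoc_castSucc]; exact hR k),
      Fin.lastCases
        (by rw [Fin.succ_last, Fin.snoc_last, Fin.snoc_castSucc, hl, sub_sub_cancel]; exact hs)
        (fun k => by rw [Fin.succ_castSucc, Fin.snoc_castSucc, Fin.snoc_castSucc]; exact hstep k)⟩
  left_inv := fun ⟨w, h0, hl, hR, hstep⟩ => by
    apply Subtype.ext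
    funext k
    induction k using Fin.lastCases with
    | last => simp [hl]
    | cast k => simp
  right_inv := fun ⟨⟨s, hs⟩, v, h0, hl, hR, hstep⟩ => by
    have hs' : q - (Fin.snoc v q : Fin (n + 2) → ℤ × ℤ) (Fin.last n).castSucc = s := by
      rw [Fin.snoc_castSucc, hl, sub_sub_cancel]
    exact Sigma.subtype_ext (Subtype.ext hs') (funext fun k => by simp)

theorem isEmpty_of_not_mem (hq : q ∉ R) : IsEmpty (ConfinedWalk S R p₀ n q) :=
  ⟨fun w => hq (w.2.2.1 ▸ w.2.2.2.1 _)⟩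

instance finite : ∀ n q, Finite (ConfinedWalk S R p₀ n q)
  | 0, _ => @Finite.of_subsingleton _ ⟨fun w w' => Subtype.ext <| funext fun k => by
      rw [Fin.fin_one_eq_zero k, w.2.1, w'.2.1]⟩
  | n + 1, q => by
    by_cases hq : q ∈ R
    · have := fun q => finite n q
      exact Finite.of_equiv _ (snocEquiv hq).symm
    · have := isEmpty_of_not_mem (S := S) (p₀ := p₀) (n := n + 1) hq
      infer_instance

end ConfinedWalk

theorem walkCount_eq_zero_of_not_mem (hq : q ∉ R) : walkCount S R p₀ n q = 0 :=
  have := ConfinedWalk.isEmpty_of_not_mem (S := S) (p₀ := p₀) (n := n) hq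
  Nat.card_of_isEmpty

theorem walkCount_succ (hq : q ∈ R) :
    walkCount S R p₀ (n + 1) q = ∑ s ∈ S, walkCount S R p₀ n (q - s) := by
  rw [walkCount_eq_card, Nat.card_congr (ConfinedWalk.snocEquiv hq), Nat.card_sigma,
    ← Finset.sum_coe_sort S]
  rfl

theorem mem_box_of_walkCount_ne_zero (hS : S ⊆ Finset.Icc (-1, -1) (1, 1))
    (h : walkCount S R p₀ n q ≠ 0) : q ∈ box p₀ n := by
  induction n generalizing q with
  | zero =>
    obtain ⟨w⟩ := (Nat.card_ne_zero.mp h).1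
    simp [box, ← w.2.2.1, Fin.last_zero, w.2.1]
  | succ n ih =>
    by_cases hq : q ∈ R
    · rw [walkCount_succ hq] at h
      obtain ⟨s, hs, hs0⟩ := Finset.exists_ne_zero_of_sum_ne_zero h
      have hqs := ih hs0
      have hs := hS hs
      simp only [box, Finset.mem_Icc, Prod.le_def, Prod.fst_sub, Prod.snd_sub] at hqs hs ⊢
      push_cast
      omega
    · exact absurd (walkCount_eq_zero_of_not_mem hq) h

end Walks

theorem ite_eq_ite_of_ne_zero {M : Type*} [Zero M] {P Q : Prop} [Decidable P] [Decidable Q]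
    {x : M} (h : x ≠ 0 → (P ↔ Q)) : (if P then x else 0) = if Q then x else 0 := by
  by_cases hx : x = 0
  · simp [hx]
  · simp [h hx]

theorem coeff_sum_natCast_mul_mono (A : Finset (ℤ × ℤ)) (c : ℤ × ℤ → ℕ) (q : ℤ × ℤ) :
    (∑ p ∈ A, (c p : LP) * mono p).coeff q = if q ∈ A then (c q : ℚ) else 0 := by
  simp only [mono, AddMonoidAlgebra.natCast_def, AddMonoidAlgebra.single_mul_single, zero_add,
    mul_one, AddMonoidAlgebra.coeff_sum, Finsupp.finsetSum_apply, AddMonoidAlgebra.coeff_single,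
    Finsupp.single_apply, Finset.sum_ite_eq']

theorem coeff_sum_natCast_mul_mono_comp {ι : Type*} (s : Finset ι)
    {g : ι → ℤ × ℤ} (hg : g.Injective) (c : ℤ × ℤ → ℕ) (q : ℤ × ℤ) :
    (∑ i ∈ s, (c (g i) : LP) * mono (g i)).coeff q = if q ∈ s.image g then (c q : ℚ) else 0 := by
  rw [← Finset.sum_image (f := fun p => (c p : LP) * mono p) hg.injOn, coeff_sum_natCast_mul_mono]

theorem coeff_coeff_ite {n : ℕ} {p : ℤ × ℤ} (P : Prop) [Decidable P] (F : PS) :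
    (PowerSeries.coeff n (if P then F else 0)).coeff p =
      if P then (PowerSeries.coeff n F).coeff p else 0 := by
  split_ifs <;> simp

theorem coeff_coeff_sum_CL_mono_mul {S : Finset (ℤ × ℤ)} (F : ℤ × ℤ → PS) (n : ℕ) (q : ℤ × ℤ) :
    (PowerSeries.coeff n (∑ s ∈ S, CL (mono s) * F s)).coeff q =
      ∑ s ∈ S, (PowerSeries.coeff n (F s)).coeff (q - s) := by
  simp only [map_sum, CL, PowerSeries.coeff_C_mul, AddMonoidAlgebra.coeff_sum,
    Finsupp.finsetSum_apply, mono, AddMonoidAlgebra.coeff_single_mul_apply, one_mul,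
    neg_add_eq_sub]

section Coefficients

variable {S : Finset (ℤ × ℤ)} {i₀ n : ℕ} {q : ℤ × ℤ}

theorem mem_cone_and_box_of_walkCount_ne_zero (hS : S ⊆ Finset.Icc (-1, -1) (1, 1))
    (h : (walkCount S cone (start i₀) n q : ℚ) ≠ 0) :
    (0 ≤ q.1 ∨ 0 ≤ q.2) ∧ i₀ - n ≤ q.1 ∧ q.1 ≤ i₀ + n ∧ i₀ - n ≤ q.2 ∧ q.2 ≤ i₀ + n := by
  rw [Nat.cast_ne_zero] at h
  have hbox := mem_box_of_walkCount_ne_zero hS h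
  simp only [box, start, Finset.mem_Icc, Prod.le_def] at hbox
  have hq : q ∈ cone := by_contra fun hq => h (walkCount_eq_zero_of_not_mem hq)
  exact ⟨hq, by omega⟩

variable (hS : S ⊆ Finset.Icc (-1, -1) (1, 1))
include hS

theorem coeff_coeff_Lhat :
    (PowerSeries.coeff n (Lhat S i₀)).coeff q =
      if 0 ≤ q.1 ∧ q.2 ≤ q.1 - 1 then (walkCount S cone (start i₀) n q : ℚ) else 0 := by
  rw [Lhat, PowerSeries.coeff_mk, coeff_sum_natCast_mul_mono]
  refine ite_eq_ite_of_ne_zero fun h => ?_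
  have := mem_cone_and_box_of_walkCount_ne_zero hS h
  simp only [Finset.mem_filter, box, start, Finset.mem_Icc, Prod.le_def]
  omega

theorem coeff_coeff_Dhat :
    (PowerSeries.coeff n (Dhat S i₀)).coeff q =
      if q.2 = q.1 then (walkCount S cone (start i₀) n q : ℚ) else 0 := by
  rw [Dhat, PowerSeries.coeff_mk, coeff_sum_natCast_mul_mono_comp _
    (g := fun i : ℤ => (i, i)) fun _ _ h => (Prod.ext_iff.mp h).1]
  refine ite_eq_ite_of_ne_zero fun h => ?_
  have := mem_cone_and_box_of_walkCount_ne_zero hS h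
  simp only [Finset.mem_image, Finset.mem_Icc, Prod.ext_iff]
  constructor
  · rintro ⟨i, -, h1, h2⟩; omega
  · intro h'; exact ⟨q.1, by omega, rfl, h'.symm⟩

theorem coeff_coeff_Dlow :
    (PowerSeries.coeff n (Dlow S i₀)).coeff q =
      if q.2 = q.1 - 1 then (walkCount S cone (start i₀) n q : ℚ) else 0 := by
  rw [Dlow, PowerSeries.coeff_mk, coeff_sum_natCast_mul_mono_comp _
    (g := fun i : ℤ => (i, i - 1)) fun _ _ h => (Prod.ext_iff.mp h).1]
  refine ite_eq_ite_of_ne_zero fun h => ?_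
  have := mem_cone_and_box_of_walkCount_ne_zero hS h
  simp only [Finset.mem_image, Finset.mem_Icc, Prod.ext_iff]
  constructor
  · rintro ⟨i, -, h1, h2⟩; omega
  · intro h'; exact ⟨q.1, by omega, rfl, h'.symm⟩

theorem coeff_coeff_L0minus :
    (PowerSeries.coeff n (L0minus S i₀)).coeff q =
      if q.1 = 0 ∧ q.2 < 0 then (walkCount S cone (start i₀) n q : ℚ) else 0 := by
  rw [L0minus, PowerSeries.coeff_mk, coeff_sum_natCast_mul_mono_comp _
    (g := fun j : ℤ => (0, j)) fun _ _ h => (Prod.ext_iff.mp h).2]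
  refine ite_eq_ite_of_ne_zero fun h => ?_
  have := mem_cone_and_box_of_walkCount_ne_zero hS h
  simp only [Finset.mem_image, Finset.mem_Icc, Prod.ext_iff]
  constructor
  · rintro ⟨j, hj, h1, h2⟩; omega
  · intro h'; exact ⟨q.2, by omega, h'.1.symm, rfl⟩

omit hS in
theorem coeff_coeff_mono_mul_C0m1 :
    (PowerSeries.coeff n (CL (mono (0, -1)) * C0m1 S i₀)).coeff q =
      if q = (0, -1) then (walkCount S cone (start i₀) n q : ℚ) else 0 := by
  rw [CL, PowerSeries.coeff_C_mul, C0m1, PowerSeries.coeff_mk, mono,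
    AddMonoidAlgebra.natCast_def, AddMonoidAlgebra.single_mul_single, add_zero, one_mul,
    AddMonoidAlgebra.coeff_single, Finsupp.single_apply]
  split_ifs with h h' h' <;> simp_all

theorem coeff_zero_Lhat : PowerSeries.coeff 0 (Lhat S i₀) = 0 := by
  ext q
  rw [coeff_coeff_Lhat hS, AddMonoidAlgebra.coeff_zero, Finsupp.zero_apply, ite_eq_right_iff]
  intro hq
  by_contra h
  have := mem_cone_and_box_of_walkCount_ne_zero hS h
  omega

end Coefficients

theorem ite_lower_add_step {s p : ℤ × ℤ} (hs : s ∈ Finset.Icc (-1, -1) (1, 1))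
    (hm : s ≠ (-1, 1)) (hp : s ≠ (1, -1)) (hpc : p ∈ cone) (x : ℚ) :
    (if 0 ≤ (p + s).1 ∧ (p + s).2 ≤ (p + s).1 - 1 then x else 0) =
      (if 0 ≤ p.1 ∧ p.2 ≤ p.1 - 1 then x else 0) +
      (if s = (1, 0) then if p.2 = p.1 then x else 0 else 0) +
      (if s = (0, -1) then if p.2 = p.1 then x else 0 else 0) -
      (if s = (-1, 0) then if p.2 = p.1 - 1 then x else 0 else 0) -
      (if s = (0, 1) then if p.2 = p.1 - 1 then x else 0 else 0) -
      (if s = (-1, 0) then if p.1 = 0 ∧ p.2 < 0 then x else 0 else 0) -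
      (if s = (-1, -1) then if p.1 = 0 ∧ p.2 < 0 then x else 0 else 0) +
      (if s = (-1, 0) then if p = (0, -1) then x else 0 else 0) := by
  obtain ⟨a, b⟩ := s
  obtain ⟨i, j⟩ := p
  simp only [Finset.mem_Icc, Prod.le_def] at hs
  replace hpc : 0 ≤ i ∨ 0 ≤ j := hpc
  obtain ⟨⟨ha, hb⟩, ha', hb'⟩ := hs
  interval_cases a <;> interval_cases b <;>
    simp only [Prod.mk_add_mk, Prod.mk.injEq, ↓reduceIte, ne_eq, Int.reduceNeg, reduceCtorEq,
      zero_ne_one, one_ne_zero, zero_eq_neg, and_false, and_true, and_self, not_true_eq_false,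
      not_false_eq_true] at hm hp ⊢ <;>
    split_ifs <;> first | ring1 | (exfalso; omega)

noncomputable def stepSeries (S : Finset (ℤ × ℤ)) (i₀ : ℕ) (s : ℤ × ℤ) : PS :=
  Lhat S i₀ + (if s = (1, 0) then Dhat S i₀ else 0) + (if s = (0, -1) then Dhat S i₀ else 0) -
    (if s = (-1, 0) then Dlow S i₀ else 0) - (if s = (0, 1) then Dlow S i₀ else 0) -
    (if s = (-1, 0) then L0minus S i₀ else 0) - (if s = (-1, -1) then L0minus S i₀ else 0) +
    (if s = (-1, 0) then CL (mono (0, -1)) * C0m1 S i₀ else 0)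

theorem coeff_coeff_stepSeries {S : Finset (ℤ × ℤ)} {i₀ n : ℕ} {s : ℤ × ℤ} (p : ℤ × ℤ)
    (hS : S ⊆ Finset.Icc (-1, -1) (1, 1)) (hs : s ∈ Finset.Icc (-1, -1) (1, 1))
    (hm : s ≠ (-1, 1)) (hp : s ≠ (1, -1)) :
    (PowerSeries.coeff n (stepSeries S i₀ s)).coeff p =
      if 0 ≤ (p + s).1 ∧ (p + s).2 ≤ (p + s).1 - 1 then
        (walkCount S cone (start i₀) n p : ℚ) else 0 := by
  simp only [stepSeries, map_add, map_sub, AddMonoidAlgebra.coeff_add,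
    AddMonoidAlgebra.coeff_sub, Finsupp.add_apply, Finsupp.sub_apply, coeff_coeff_ite,
    coeff_coeff_Lhat hS, coeff_coeff_Dhat hS, coeff_coeff_Dlow hS, coeff_coeff_L0minus hS,
    coeff_coeff_mono_mul_C0m1]
  by_cases hpc : p ∈ cone
  · exact (ite_lower_add_step hs hm hp hpc _).symm
  · simp [walkCount_eq_zero_of_not_mem hpc]

section Regrouping

variable {S : Finset (ℤ × ℤ)} {i₀ : ℕ}

theorem sum_CL_mono_mul_ite_eq (v : ℤ × ℤ) (F : PS) :
    ∑ s ∈ S, CL (mono s) * (if s = v then F else 0) = dl S v * CL (mono v) * F := by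
  simp only [mul_ite, mul_zero, Finset.sum_ite_eq', dl]
  split_ifs <;> ring

theorem CL_mono_mul_CL_mono (v w : ℤ × ℤ) : CL (mono v) * CL (mono w) = CL (mono (v + w)) := by
  rw [← map_mul, mono, mono, mono, AddMonoidAlgebra.single_mul_single, one_mul]

theorem T_mul_sum_CL_mono_mul_stepSeries :
    T * ∑ s ∈ S, CL (mono s) * stepSeries S i₀ s =
      T * CL (∑ s ∈ S, mono s) * Lhat S i₀ +
      T * (dl S (1, 0) * CL (mono (1, 0)) + dl S (0, -1) * CL (mono (0, -1))) * Dhat S i₀ -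
      T * (dl S (-1, 0) * CL (mono (-1, 0)) + dl S (0, 1) * CL (mono (0, 1))) * Dlow S i₀ -
      T * (dl S (-1, 0) * CL (mono (-1, 0)) + dl S (-1, -1) * CL (mono (-1, -1))) *
        L0minus S i₀ +
      T * dl S (-1, 0) * CL (mono (-1, -1)) * C0m1 S i₀ := by
  simp only [stepSeries, mul_add, mul_sub, Finset.sum_add_distrib, Finset.sum_sub_distrib,
    sum_CL_mono_mul_ite_eq, ← Finset.sum_mul, ← map_sum]
  have hmono : CL (mono (-1, 0)) * CL (mono (0, -1)) = CL (mono (-1, -1)) :=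
    CL_mono_mul_CL_mono _ _
  linear_combination T * dl S (-1, 0) * C0m1 S i₀ * hmono

end Regrouping

theorem construction_equation_lower_part_general
    (S : Finset (ℤ × ℤ)) (hS : S ⊆ (Finset.Icc (-1, -1) (1, 1)).erase (0, 0))
    (hm : ((-1 : ℤ), (1 : ℤ)) ∉ S) (hp : ((1 : ℤ), (-1 : ℤ)) ∉ S)
    (i₀ : ℕ) :
    Lhat S i₀ =
      T * CL (∑ s ∈ S, mono s) * Lhat S i₀ +
      T * (dl S (1, 0) * CL (mono (1, 0)) + dl S (0, -1) * CL (mono (0, -1))) * Dhat S i₀ -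
      T * (dl S (-1, 0) * CL (mono (-1, 0)) + dl S (0, 1) * CL (mono (0, 1))) * Dlow S i₀ -
      T * (dl S (-1, 0) * CL (mono (-1, 0)) + dl S (-1, -1) * CL (mono (-1, -1))) *
        L0minus S i₀ +
      T * dl S (-1, 0) * CL (mono (-1, -1)) * C0m1 S i₀ := by
  have hS' : S ⊆ Finset.Icc (-1, -1) (1, 1) := hS.trans (Finset.erase_subset _ _)
  rw [← T_mul_sum_CL_mono_mul_stepSeries]
  ext (_ | n) q
  · rw [T, PowerSeries.coeff_zero_X_mul, coeff_zero_Lhat hS']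
  have hstep : ∀ s ∈ S, (PowerSeries.coeff n (stepSeries S i₀ s)).coeff (q - s) =
      if 0 ≤ q.1 ∧ q.2 ≤ q.1 - 1 then (walkCount S cone (start i₀) n (q - s) : ℚ) else 0 :=
    fun s hs => by
      rw [coeff_coeff_stepSeries _ hS' (hS' hs) (ne_of_mem_of_not_mem hs hm)
        (ne_of_mem_of_not_mem hs hp), sub_add_cancel]
  rw [T, PowerSeries.coeff_succ_X_mul, coeff_coeff_sum_CL_mono_mul, Finset.sum_congr rfl hstep,
    Finset.sum_ite_irrel, Finset.sum_const_zero, coeff_coeff_Lhat hS']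
  split_ifs with hq
  · rw [walkCount_succ (Or.inl hq.1), Nat.cast_sum]
  · rfl

/-- The step-by-step construction equation for the lower-part generating function `L̂`,
for a symmetric model (Hypothesis (H)) started at the diagonal point `(i₀, i₀)`. -/
theorem construction_equation_lower_part
    (S : Finset (ℤ × ℤ)) (hS : S ⊆ (Finset.Icc (-1, -1) (1, 1)).erase (0, 0))
    (hsym : ∀ s ∈ S, (s.2, s.1) ∈ S)
    (hm : ((-1 : ℤ), (1 : ℤ)) ∉ S) (hp : ((1 : ℤ), (-1 : ℤ)) ∉ S)
    (i₀ : ℕ) :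
    Lhat S i₀ =
      T * CL (∑ s ∈ S, mono s) * Lhat S i₀ +
      T * (dl S (1, 0) * CL (mono (1, 0)) + dl S (0, -1) * CL (mono (0, -1))) * Dhat S i₀ -
      T * (dl S (-1, 0) * CL (mono (-1, 0)) + dl S (0, 1) * CL (mono (0, 1))) * Dlow S i₀ -
      T * (dl S (-1, 0) * CL (mono (-1, 0)) + dl S (-1, -1) * CL (mono (-1, -1))) *
        L0minus S i₀ +
      T * dl S (-1, 0) * CL (mono (-1, -1)) * C0m1 S i₀ :=
  construction_equation_lower_part_general S hS hm hp i₀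
end

section
/- Let S ⊆ {−1,0,1}² ∖ {(0,0)} be any step set, fix t ∈ ℂ, and let K be its kernel with discriminants d and d̃. Let U ⊆ ℂ be an open set and Y : U → ℂ a holomorphic function such that K(x, Y(x)) = 0 for all x ∈ U. Then d(x)·Y′(x)² = d̃(Y(x)) for all x ∈ U. -/
open scoped BigOperators

/-- `a(x) = t x ∑_{(i,1) ∈ S} x^i`, evaluated at complex `t, x`
(written polynomially: for small steps `x·x^i = x^{i+1}` has nonnegative exponent). -/
noncomputable def aC (S : Finset (ℤ × ℤ)) (t x : ℂ) : ℂ :=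
  t * ∑ s ∈ S.filter (fun s => s.2 = 1), x ^ (s.1 + 1).toNat

/-- `b(x) = t x ∑_{(i,0) ∈ S} x^i - x`. -/
noncomputable def bC (S : Finset (ℤ × ℤ)) (t x : ℂ) : ℂ :=
  t * ∑ s ∈ S.filter (fun s => s.2 = 0), x ^ (s.1 + 1).toNat - x

/-- `c(x) = t x ∑_{(i,-1) ∈ S} x^i`. -/
noncomputable def cC (S : Finset (ℤ × ℤ)) (t x : ℂ) : ℂ :=
  t * ∑ s ∈ S.filter (fun s => s.2 = -1), x ^ (s.1 + 1).toNat

/-- `ã(y) = t y ∑_{(1,j) ∈ S} y^j`. -/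
noncomputable def aTC (S : Finset (ℤ × ℤ)) (t y : ℂ) : ℂ :=
  t * ∑ s ∈ S.filter (fun s => s.1 = 1), y ^ (s.2 + 1).toNat

/-- `b̃(y) = t y ∑_{(0,j) ∈ S} y^j - y`. -/
noncomputable def bTC (S : Finset (ℤ × ℤ)) (t y : ℂ) : ℂ :=
  t * ∑ s ∈ S.filter (fun s => s.1 = 0), y ^ (s.2 + 1).toNat - y

/-- `c̃(y) = t y ∑_{(-1,j) ∈ S} y^j`. -/
noncomputable def cTC (S : Finset (ℤ × ℤ)) (t y : ℂ) : ℂ :=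
  t * ∑ s ∈ S.filter (fun s => s.1 = -1), y ^ (s.2 + 1).toNat

/-- The discriminant `d(x) = b(x)² - 4 a(x) c(x)`. -/
noncomputable def dC (S : Finset (ℤ × ℤ)) (t x : ℂ) : ℂ :=
  bC S t x ^ 2 - 4 * aC S t x * cC S t x

/-- The discriminant `d̃(y) = b̃(y)² - 4 ã(y) c̃(y)`. -/
noncomputable def dTC (S : Finset (ℤ × ℤ)) (t y : ℂ) : ℂ :=
  bTC S t y ^ 2 - 4 * aTC S t y * cTC S t y

/-!
Both expansions of the kernel, `K = a(x) y² + b(x) y + c(x) = ã(y) x² + b̃(y) x + c̃(y)`, give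
`∂_y K = 2 a(x) y + b(x)` and `∂_x K = 2 ã(y) x + b̃(y)`, and also
`d(x) = (∂_y K)² - 4 a(x) K` and `d̃(y) = (∂_x K)² - 4 ã(y) K`.
Along the curve `y = Y(x)` we have `K = 0`, so `d = (∂_y K)²`, `d̃ = (∂_x K)²`, and differentiating
`K(x, Y(x)) = 0` gives `∂_x K = -(∂_y K) Y'`.
-/

/-- The kernel `K(x, y) = x y (t ∑_{(i,j) ∈ S} x^i y^j - 1)`, with the factor `x y` pushed inside. -/
noncomputable def kernelC (S : Finset (ℤ × ℤ)) (t x y : ℂ) : ℂ :=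
  t * ∑ s ∈ S, x ^ (s.1 + 1).toNat * y ^ (s.2 + 1).toNat - x * y

theorem discriminant_mul_sq_eq_of_quadratics {R : Type*} [CommRing R] {a b c a' b' c' x y y' : R}
    (hy : a * y ^ 2 + b * y + c = 0) (hx : a' * x ^ 2 + b' * x + c' = 0)
    (hy' : (2 * a' * x + b') + (2 * a * y + b) * y' = 0) :
    (b ^ 2 - 4 * a * c) * y' ^ 2 = b' ^ 2 - 4 * a' * c' := by
  linear_combination ((2 * a * y + b) * y' - (2 * a' * x + b')) * hy'
    - 4 * a * y' ^ 2 * hy + 4 * a' * hx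

theorem sum_mul_pow_eq_quadratic {ι R : Type*} [CommSemiring R] (S : Finset ι) (g : ι → ℤ)
    (hg : ∀ s ∈ S, g s = -1 ∨ g s = 0 ∨ g s = 1) (f : ι → R) (y : R) :
    ∑ s ∈ S, f s * y ^ (g s + 1).toNat =
      (∑ s ∈ S with g s = 1, f s) * y ^ 2 + (∑ s ∈ S with g s = 0, f s) * y
        + ∑ s ∈ S with g s = -1, f s := by
  simp only [Finset.sum_filter, Finset.sum_mul, ← Finset.sum_add_distrib]
  refine Finset.sum_congr rfl fun s hs => ?_
  rcases hg s hs with h | h | h <;> simp [h]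

theorem coords_of_mem_Icc {s : ℤ × ℤ} (hs : s ∈ Finset.Icc (-1, -1) (1, 1)) :
    (s.1 = -1 ∨ s.1 = 0 ∨ s.1 = 1) ∧ (s.2 = -1 ∨ s.2 = 0 ∨ s.2 = 1) := by
  simp only [Finset.mem_Icc, Prod.le_def] at hs
  omega

theorem differentiable_aC (S : Finset (ℤ × ℤ)) (t : ℂ) : Differentiable ℂ (aC S t) := by
  unfold aC; fun_prop

theorem differentiable_bC (S : Finset (ℤ × ℤ)) (t : ℂ) : Differentiable ℂ (bC S t) := by
  unfold bC; fun_prop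

theorem differentiable_cC (S : Finset (ℤ × ℤ)) (t : ℂ) : Differentiable ℂ (cC S t) := by
  unfold cC; fun_prop

section Kernel

variable {S : Finset (ℤ × ℤ)} (t : ℂ)

theorem kernelC_eq_quadratic_y (hS : S ⊆ Finset.Icc (-1, -1) (1, 1)) (x y : ℂ) :
    kernelC S t x y = aC S t x * y ^ 2 + bC S t x * y + cC S t x := by
  rw [kernelC, sum_mul_pow_eq_quadratic S Prod.snd (fun s hs => (coords_of_mem_Icc (hS hs)).2)]
  simp only [aC, bC, cC]
  ring

theorem kernelC_eq_quadratic_x (hS : S ⊆ Finset.Icc (-1, -1) (1, 1)) (x y : ℂ) :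
    kernelC S t x y = aTC S t y * x ^ 2 + bTC S t y * x + cTC S t y := by
  simp_rw [kernelC, mul_comm (x ^ _),
    sum_mul_pow_eq_quadratic S Prod.fst (fun s hs => (coords_of_mem_Icc (hS hs)).1)]
  simp only [aTC, bTC, cTC]
  ring

theorem hasDerivAt_kernelC_left (hS : S ⊆ Finset.Icc (-1, -1) (1, 1)) (x y : ℂ) :
    HasDerivAt (fun x => kernelC S t x y) (2 * aTC S t y * x + bTC S t y) x := by
  simp_rw [kernelC_eq_quadratic_x t hS]
  refine (((hasDerivAt_pow 2 x).const_mul (aTC S t y)).add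
    ((hasDerivAt_id x).const_mul (bTC S t y))).add_const (cTC S t y) |>.congr_deriv ?_
  simp only [Nat.cast_ofNat, Nat.add_one_sub_one, pow_one, mul_one]
  ring

/-- Chain rule for `x ↦ K(x, Y(x))`, obtained from the expansion in powers of `y` with the
`x`-derivative of its coefficients identified through the expansion in powers of `x`. -/
theorem hasDerivAt_kernelC_comp (hS : S ⊆ Finset.Icc (-1, -1) (1, 1)) {Y : ℂ → ℂ} {x y' : ℂ}
    (hY : HasDerivAt Y y' x) :
    HasDerivAt (fun x => kernelC S t x (Y x))
      ((2 * aTC S t (Y x) * x + bTC S t (Y x)) + (2 * aC S t x * Y x + bC S t x) * y') x := by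
  have ha := (differentiable_aC S t x).hasDerivAt
  have hb := (differentiable_bC S t x).hasDerivAt
  have hc := (differentiable_cC S t x).hasDerivAt
  have hpartial : deriv (aC S t) x * Y x ^ 2 + deriv (bC S t) x * Y x + deriv (cC S t) x
      = 2 * aTC S t (Y x) * x + bTC S t (Y x) := by
    refine HasDerivAt.unique ?_ (hasDerivAt_kernelC_left t hS x (Y x))
    simp_rw [kernelC_eq_quadratic_y t hS]
    exact ((ha.mul_const _).add (hb.mul_const _)).add hc
  simp_rw [kernelC_eq_quadratic_y t hS]
  refine ((ha.mul (hY.fun_pow 2)).add (hb.mul hY)).add hc |>.congr_deriv ?_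
  rw [← hpartial]; ring

end Kernel

/-- If `Y` is holomorphic on an open set `U` and `K(x, Y(x)) = 0` on `U`, then
`d(x) Y'(x)² = d̃(Y(x))` on `U`. -/
theorem discriminant_differential_identity
    (S : Finset (ℤ × ℤ)) (hS : S ⊆ (Finset.Icc (-1, -1) (1, 1)).erase (0, 0))
    (t : ℂ) (U : Set ℂ) (hU : IsOpen U) (Y : ℂ → ℂ)
    (hY : DifferentiableOn ℂ Y U)
    (hK : ∀ x ∈ U, aC S t x * Y x ^ 2 + bC S t x * Y x + cC S t x = 0) :
    ∀ x ∈ U, dC S t x * (deriv Y x) ^ 2 = dTC S t (Y x) := by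
  intro x hx
  have hS' : S ⊆ Finset.Icc (-1, -1) (1, 1) := hS.trans (Finset.erase_subset _ _)
  have hK' : ∀ z ∈ U, kernelC S t z (Y z) = 0 := fun z hz =>
    (kernelC_eq_quadratic_y t hS' z (Y z)).trans (hK z hz)
  have hK_const : HasDerivAt (fun x => kernelC S t x (Y x)) 0 x :=
    (hasDerivAt_const x 0).congr_of_eventuallyEq (Filter.mem_of_superset (hU.mem_nhds hx) hK')
  have hYx := (hY.differentiableAt (hU.mem_nhds hx)).hasDerivAt
  refine discriminant_mul_sq_eq_of_quadratics (hK x hx) ?_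
    ((hasDerivAt_kernelC_comp t hS' hYx).unique hK_const)
  rw [← kernelC_eq_quadratic_x t hS', hK' x hx]
end

section
/- Consider Gessel's step set S = {(1,0),(−1,0),(1,1),(−1,−1)}, whose kernel is K(x,y) = xy(t(x + x^{−1} + xy + x^{−1}y^{−1}) − 1), i.e. as a quadratic in y: K(x,y) = tx²·y² + (t(x²+1) − x)·y + t. Let t, x ∈ ℂ ∖ {0} and let y₀, y₁ ∈ ℂ be the two roots of K(x,·) = 0, i.e. y₀·y₁ = 1/x² and y₀ + y₁ = (x − t(x²+1))/(tx²). Then y₀, y₁ ∉ {0, −1} and g(y₀)·g(y₁) = 1, where g(y) = y/(t(y+1)²). -/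
/-!
The product `g(y₀) g(y₁)` depends only on the symmetric functions `y₀ y₁ = 1/x²` and
`(y₀ + 1)(y₁ + 1) = y₀ y₁ + (y₀ + y₁) + 1 = 1/(t x)`: it equals
`y₀ y₁ / (t² ((y₀ + 1)(y₁ + 1))²) = (1/x²) / (t² / (t x)²) = 1`.
The same two values, being nonzero, exclude `y₀, y₁ ∈ {0, -1}`.
-/

lemma div_mul_sq_add_one_mul_div_mul_sq_add_one {K : Type*} [Field K] (t y₀ y₁ : K) :
    (y₀ / (t * (y₀ + 1) ^ 2)) * (y₁ / (t * (y₁ + 1) ^ 2)) =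
      y₀ * y₁ / (t ^ 2 * ((y₀ + 1) * (y₁ + 1)) ^ 2) := by
  rw [div_mul_div_comm]
  ring

lemma gessel_add_one_mul_add_one {K : Type*} [Field K] {t x y₀ y₁ : K} (ht : t ≠ 0)
    (hx : x ≠ 0) (hprod : y₀ * y₁ = 1 / x ^ 2)
    (hsum : y₀ + y₁ = (x - t * (x ^ 2 + 1)) / (t * x ^ 2)) :
    (y₀ + 1) * (y₁ + 1) = 1 / (t * x) := by
  calc (y₀ + 1) * (y₁ + 1) = y₀ * y₁ + (y₀ + y₁) + 1 := by ring
    _ = 1 / (t * x) := by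
      rw [hprod, hsum]
      field_simp
      ring

/-- Anti-Tutte invariant for Gessel's model: if `y₀, y₁` are the two roots of the kernel
`K(x,·) = tx²y² + (t(x²+1) - x)y + t` (given via Vieta's formulas), then
`g(y₀) g(y₁) = 1` where `g(y) = y / (t (y+1)²)`; in particular `y₀, y₁ ∉ {0, -1}`. -/
theorem gessel_anti_tutte_invariant
    (t x y₀ y₁ : ℂ) (ht : t ≠ 0) (hx : x ≠ 0)
    (hprod : y₀ * y₁ = 1 / x ^ 2)
    (hsum : y₀ + y₁ = (x - t * (x ^ 2 + 1)) / (t * x ^ 2)) :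
    y₀ ≠ 0 ∧ y₀ ≠ -1 ∧ y₁ ≠ 0 ∧ y₁ ≠ -1 ∧
      (y₀ / (t * (y₀ + 1) ^ 2)) * (y₁ / (t * (y₁ + 1) ^ 2)) = 1 := by
  have hshift := gessel_add_one_mul_add_one ht hx hprod hsum
  have hprod_ne : y₀ * y₁ ≠ 0 := by
    rw [hprod]
    exact one_div_ne_zero (pow_ne_zero 2 hx)
  have hshift_ne : (y₀ + 1) * (y₁ + 1) ≠ 0 := by
    rw [hshift]
    exact one_div_ne_zero (mul_ne_zero ht hx)
  obtain ⟨hy₀, hy₁⟩ := mul_ne_zero_iff.mp hprod_ne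
  obtain ⟨hy₀', hy₁'⟩ := mul_ne_zero_iff.mp hshift_ne
  refine ⟨hy₀, mt add_eq_zero_iff_eq_neg.mpr hy₀', hy₁, mt add_eq_zero_iff_eq_neg.mpr hy₁', ?_⟩
  rw [div_mul_sq_add_one_mul_div_mul_sq_add_one, hprod, hshift]
  field_simp
end

section
/- Let F be a field of characteristic zero and let t, W ∈ F with t ≠ 0, W ≠ 0 and W = t·(2 + W³). Then the Kreweras discriminant d̃(y) = (t − y)² − 4t²y³ factors in F[y] as d̃(y) = −4t²·(y − 1/W²)·(y² − (1/(4t²) − 1/W²)·y + W²/4). In particular 1/W² is a root of d̃, and the other two roots y₁, y₂ satisfy y₁ + y₂ = 1/(4t²) − 1/W² and y₁·y₂ = W²/4. -/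
open Polynomial

/-!
Of the coefficients of the claimed factorization only the one of `y` is not immediate; after
multiplying by `W⁴` it reads `(tW³ − W)² = (2t)²`, which holds since the defining relation says
`tW³ − W = −2t`. Evaluating at `1/W²` gives the root, and comparing coefficients of the quadratic
factor with `(X − y₁)(X − y₂)` gives the sum and product of the other two roots.
-/

theorem Polynomial.add_eq_and_mul_eq_of_X_sq_sub_eq {R : Type*} [CommRing R] {s p a b : R}
    (h : X ^ 2 - C s * X + C p = (X - C a) * (X - C b)) : a + b = s ∧ a * b = p := by
  have hlin : C (a + b) * X - C (a * b) = C s * X - C p := by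
    rw [C_add, C_mul]
    linear_combination h
  have h1 := congrArg (coeff · 1) hlin
  have h0 := congrArg (coeff · 0) hlin
  simp only [coeff_sub, coeff_C_mul_X, coeff_C_of_ne_zero one_ne_zero, coeff_C_zero,
    mul_coeff_zero, coeff_X_zero, mul_zero, sub_zero, zero_sub, neg_inj] at h1 h0
  exact ⟨h1, h0⟩

theorem kreweras_discriminant_apply_eq {F : Type*} [Field F] (h2 : (2 : F) ≠ 0) {t W : F}
    (ht : t ≠ 0) (hW : W ≠ 0) (hrel : W = t * (2 + W ^ 3)) (y : F) :
    (t - y) ^ 2 - 4 * t ^ 2 * y ^ 3 =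
      -4 * t ^ 2 * (y - 1 / W ^ 2) * (y ^ 2 - (1 / (4 * t ^ 2) - 1 / W ^ 2) * y + W ^ 2 / 4) := by
  have h4 : (4 : F) ≠ 0 := by simpa [show (4 : F) = 2 * 2 by norm_num] using h2
  field_simp
  linear_combination -(y * (t * W ^ 3 - W - 2 * t)) * hrel

/-- Factorization of the Kreweras discriminant `d̃(y) = (t-y)² - 4t²y³`:
it equals `-4t² (y - 1/W²)(y² - (1/(4t²) - 1/W²) y + W²/4)`, so that `1/W²` is a root
and the other two roots `y₁, y₂` satisfy `y₁ + y₂ = 1/(4t²) - 1/W²`, `y₁ y₂ = W²/4`. -/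
theorem kreweras_discriminant_factorization
    (F : Type*) [Field F] [CharZero F] (t W : F)
    (ht : t ≠ 0) (hW : W ≠ 0) (hrel : W = t * (2 + W ^ 3)) :
    ((C t - X) ^ 2 - C (4 * t ^ 2) * X ^ 3 =
      C (-4 * t ^ 2) * (X - C (1 / W ^ 2)) *
        (X ^ 2 - C (1 / (4 * t ^ 2) - 1 / W ^ 2) * X + C (W ^ 2 / 4))) ∧
    ((t - 1 / W ^ 2) ^ 2 - 4 * t ^ 2 * (1 / W ^ 2) ^ 3 = 0) ∧
    (∀ y₁ y₂ : F,
      X ^ 2 - C (1 / (4 * t ^ 2) - 1 / W ^ 2) * X + C (W ^ 2 / 4) =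
          (X - C y₁) * (X - C y₂) →
        y₁ + y₂ = 1 / (4 * t ^ 2) - 1 / W ^ 2 ∧ y₁ * y₂ = W ^ 2 / 4) := by
  have hfactor : (C t - X) ^ 2 - C (4 * t ^ 2) * X ^ 3 =
      C (-4 * t ^ 2) * (X - C (1 / W ^ 2)) *
        (X ^ 2 - C (1 / (4 * t ^ 2) - 1 / W ^ 2) * X + C (W ^ 2 / 4)) :=
    Polynomial.funext fun y => by
      simpa using kreweras_discriminant_apply_eq two_ne_zero ht hW hrel y
  refine ⟨hfactor, ?_, fun _ _ => Polynomial.add_eq_and_mul_eq_of_X_sq_sub_eq⟩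
  have hroot := congrArg (eval (1 / W ^ 2)) hfactor
  simp only [eval_sub, eval_mul, eval_pow, eval_C, eval_X] at hroot
  rwa [sub_self, mul_zero, zero_mul] at hroot
end

section
/- Let F be a field of characteristic zero and let t, W ∈ F with t ≠ 0, W ≠ 0 and W = t·(2 + W³). Let y₁, y₂ ∈ F ∖ {0} satisfy y₁ + y₂ = 1/(4t²) − 1/W² and y₁·y₂ = W²/4. Then ((1/y₁ − 1/W)·(1/y₂ − 1/W))² · (1 − y₁W²)·(1 − y₂W²) = (1 − W³)³ / W⁴. (Equivalently, with w(y) = (1/y − 1/W)·√(1 − yW²), the product P = w(y₁)·w(y₂) satisfies P² = (1 − W³)³/W⁴, i.e. P = (1 − W³)^{3/2}/W².) -/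
/-! Eliminating `t` through `t = W / (2 + W³)` turns the data into the elementary symmetric
functions `y₁ + y₂ = W (W³ + 4) / 4` and `y₁ y₂ = W² / 4`. Both factors of the claim are
symmetric in `y₁, y₂`, and with these values they collapse to
`(1/y₁ - 1/W)(1/y₂ - 1/W) = (1 - W³) / W²` and `(1 - y₁W²)(1 - y₂W²) = 1 - W³`. -/

theorem one_div_sub_mul_one_div_sub {F : Type*} [Field F] {a b c : F}
    (hab : a * b ≠ 0) (hc : c ≠ 0) :
    (1 / a - 1 / c) * (1 / b - 1 / c) = (c ^ 2 - (a + b) * c + a * b) / (c ^ 2 * (a * b)) := by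
  have ha : a ≠ 0 := left_ne_zero_of_mul hab
  have hb : b ≠ 0 := right_ne_zero_of_mul hab
  field_simp
  ring

theorem kreweras_branch_sum {F : Type*} [Field F] [NeZero (2 : F)] {t W : F}
    (hW : W ≠ 0) (hrel : W = t * (2 + W ^ 3)) :
    1 / (4 * t ^ 2) - 1 / W ^ 2 = W * (W ^ 3 + 4) / 4 := by
  have h2W : 2 + W ^ 3 ≠ 0 := fun h ↦ hW (by rw [hrel, h, mul_zero])
  have ht : t = W / (2 + W ^ 3) := by rw [eq_div_iff h2W, ← hrel]
  subst ht
  have h4 : (4 : F) ≠ 0 := by simpa [show (4 : F) = 2 * 2 by norm_num] using NeZero.ne (2 : F)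
  field_simp
  ring

theorem kreweras_gluing_product_general
    (F : Type*) [Field F] [CharZero F] (t W y₁ y₂ : F)
    (hW : W ≠ 0) (hrel : W = t * (2 + W ^ 3))
    (hsum : y₁ + y₂ = 1 / (4 * t ^ 2) - 1 / W ^ 2)
    (hprod : y₁ * y₂ = W ^ 2 / 4) :
    ((1 / y₁ - 1 / W) * (1 / y₂ - 1 / W)) ^ 2 *
        ((1 - y₁ * W ^ 2) * (1 - y₂ * W ^ 2)) =
      (1 - W ^ 3) ^ 3 / W ^ 4 := by
  have hs : y₁ + y₂ = W * (W ^ 3 + 4) / 4 := hsum.trans (kreweras_branch_sum hW hrel)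
  have hp : y₁ * y₂ ≠ 0 := by
    rw [hprod]
    exact div_ne_zero (pow_ne_zero 2 hW) (by norm_num)
  have hinv : (1 / y₁ - 1 / W) * (1 / y₂ - 1 / W) = (1 - W ^ 3) / W ^ 2 := by
    rw [one_div_sub_mul_one_div_sub hp hW, hs, hprod]
    field_simp
    ring
  have hlin : (1 - y₁ * W ^ 2) * (1 - y₂ * W ^ 2) = 1 - W ^ 3 := by
    linear_combination (-W ^ 2) * hs + W ^ 4 * hprod
  rw [hinv, hlin]
  field_simp

/-- The product `P = w(y₁) w(y₂)` of the values of the Kreweras conformal gluing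
function `w(y) = (1/y - 1/W)√(1 - yW²)` at the two finite branch points satisfies
`P² = (1 - W³)³ / W⁴`. -/
theorem kreweras_gluing_product
    (F : Type*) [Field F] [CharZero F] (t W y₁ y₂ : F)
    (ht : t ≠ 0) (hW : W ≠ 0) (hrel : W = t * (2 + W ^ 3))
    (hy₁ : y₁ ≠ 0) (hy₂ : y₂ ≠ 0)
    (hsum : y₁ + y₂ = 1 / (4 * t ^ 2) - 1 / W ^ 2)
    (hprod : y₁ * y₂ = W ^ 2 / 4) :
    ((1 / y₁ - 1 / W) * (1 / y₂ - 1 / W)) ^ 2 *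
        ((1 - y₁ * W ^ 2) * (1 - y₂ * W ^ 2)) =
      (1 - W ^ 3) ^ 3 / W ^ 4 :=
  kreweras_gluing_product_general F t W y₁ y₂ hW hrel hsum hprod
end

section
/- Let F be a field of characteristic zero and let t, W ∈ F with t ≠ 0, W ≠ 0 and W = t·(2 + W³). Let y₁, y₂ ∈ F ∖ {0} satisfy y₁ + y₂ = 1/(4t²) − 1/W² and y₁·y₂ = W²/4. Then (1 − y₁W²)·(1/y₁ − 1/W)² + (1 − y₂W²)·(1/y₂ − 1/W)² = −(W⁶ − 20W³ − 8)/(4W²). (Equivalently, with w(y) = (1/y − 1/W)·√(1 − yW²) and S = w(y₁) + w(y₂), P = w(y₁)·w(y₂), one has S² = 2P − (W⁶ − 20W³ − 8)/(4W²).) -/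
/-!
Each summand `(1 - yW²)(1/y - 1/W)²` expands to a polynomial in `y` and `1/y`, so the sum over
the two branch points is a symmetric function of `y₁, y₂`, hence a rational function of
`s = y₁ + y₂` and `p = y₁y₂ = W²/4`. The kernel relation `W = t(2 + W³)` gives
`1/(4t²) = (2 + W³)²/(4W²)`, so `s = W(W³ + 4)/4`, and the claim becomes an identity in `W` alone.
-/

section

variable {K : Type*} [Field K]

theorem gluing_sq_add_gluing_sq_eq (W y₁ y₂ : K) (hW : W ≠ 0) (hy₁ : y₁ ≠ 0) (hy₂ : y₂ ≠ 0) :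
    (1 - y₁ * W ^ 2) * (1 / y₁ - 1 / W) ^ 2 + (1 - y₂ * W ^ 2) * (1 / y₂ - 1 / W) ^ 2 =
      ((y₁ + y₂) / (y₁ * y₂)) ^ 2 - 2 / (y₁ * y₂) - (2 / W + W ^ 2) * ((y₁ + y₂) / (y₁ * y₂))
        + 2 / W ^ 2 + 4 * W - (y₁ + y₂) := by
  field_simp
  ring

theorem one_div_four_mul_sq_sub_one_div_sq_of_eq_mul {t W : K} (h4 : (4 : K) ≠ 0)
    (ht : t ≠ 0) (hW : W ≠ 0) (hrel : W = t * (2 + W ^ 3)) :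
    1 / (4 * t ^ 2) - 1 / W ^ 2 = W * (W ^ 3 + 4) / 4 := by
  field_simp
  linear_combination (W + t * (2 + W ^ 3)) * hrel

end

/-- The sum `S = w(y₁) + w(y₂)` of the values of the Kreweras conformal gluing
function `w(y) = (1/y - 1/W)√(1 - yW²)` at the two finite branch points satisfies
`S² - 2P = Σᵢ (1 - yᵢW²)(1/yᵢ - 1/W)² = -(W⁶ - 20W³ - 8)/(4W²)`. -/
theorem kreweras_gluing_sum_of_squares
    (F : Type*) [Field F] [CharZero F] (t W y₁ y₂ : F)
    (ht : t ≠ 0) (hW : W ≠ 0) (hrel : W = t * (2 + W ^ 3))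
    (hy₁ : y₁ ≠ 0) (hy₂ : y₂ ≠ 0)
    (hsum : y₁ + y₂ = 1 / (4 * t ^ 2) - 1 / W ^ 2)
    (hprod : y₁ * y₂ = W ^ 2 / 4) :
    (1 - y₁ * W ^ 2) * (1 / y₁ - 1 / W) ^ 2 +
        (1 - y₂ * W ^ 2) * (1 / y₂ - 1 / W) ^ 2 =
      -(W ^ 6 - 20 * W ^ 3 - 8) / (4 * W ^ 2) := by
  rw [gluing_sq_add_gluing_sq_eq W y₁ y₂ hW hy₁ hy₂, hprod,
    hsum, one_div_four_mul_sq_sub_one_div_sq_of_eq_mul (by norm_num) ht hW hrel]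
  field_simp
  ring
end
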